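/- arXiv:1205.3937 — 5 statements merged into one kernel-verified Lean document; each statement's English description precedes it below -/
import Mathlib

section
/- For finite sets A, B of nonzero elements of F_p and any ε > 0, there exists a subset G of A × B with |G| ≥ (1−ε)|A||B| such that the partial difference set {a − b : (a,b) ∈ G} has cardinality at most C(ε) · |A(B+1)| · |B(A+1)| · |A/B| / (|A||B|), where A(B+1) = {a(b+1) : a ∈ A, b ∈ B}, B(A+1) = {b(a+1) : b ∈ B, a ∈ A}, and A/B = {a/b : a ∈ A, b ∈ B}. -/
open Finset Pointwise

/-!
Call a pair `(a, b) ∈ A × B` popular when its ratio `w = a / b` has at least `θ` representations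
`w = a' / b'`, where `θ = ε |A| |B| / (2 |A / B|)`; then at most `|A / B| θ = ε |A| |B| / 2` pairs
are unpopular, and `G` is the set of popular pairs. For `(a, b) ∈ G` put `d = a - b`: each
representation `w = a' / b'` gives `x = a (b' + 1) ∈ A (B + 1)` with
`x - d = a b' + b = b (w b' + 1) ∈ B (A + 1)`, so `d` is a difference `x - y` with
`x ∈ A (B + 1)`, `y ∈ B (A + 1)` in at least `θ` ways. Counting pairs `(x, y)` gives
`|A −_G B| θ ≤ |A (B + 1)| |B (A + 1)|`.
-/

section DifferenceCount

variable {α : Type*} [AddGroup α] [DecidableEq α]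

lemma sum_card_filter_sub_mem_le (T X Y : Finset α) :
    ∑ d ∈ T, #{x ∈ X | x - d ∈ Y} ≤ #X * #Y :=
  calc ∑ d ∈ T, #{x ∈ X | x - d ∈ Y}
      = ∑ x ∈ X, #{d ∈ T | x - d ∈ Y} :=
        sum_card_bipartiteAbove_eq_sum_card_bipartiteBelow (r := fun d x => x - d ∈ Y)
    _ ≤ ∑ _x ∈ X, #Y := sum_le_sum fun x _ =>
        card_le_card_of_injOn (x - ·) (fun _ hd => (mem_filter.mp hd).2)
          (fun _ _ _ _ h => sub_right_injective h)
    _ = #X * #Y := by rw [sum_const, smul_eq_mul]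

lemma card_mul_le_of_forall_le_card_filter_sub_mem {T X Y : Finset α} {θ : ℝ}
    (h : ∀ d ∈ T, θ ≤ #{x ∈ X | x - d ∈ Y}) : #T * θ ≤ #X * #Y :=
  calc #T * θ = ∑ _d ∈ T, θ := by rw [sum_const, nsmul_eq_mul]
    _ ≤ ∑ d ∈ T, (#{x ∈ X | x - d ∈ Y} : ℝ) := sum_le_sum h
    _ ≤ #X * #Y := by exact_mod_cast sum_card_filter_sub_mem_le T X Y

end DifferenceCount

section DivCount

variable {K : Type*} [Field K] [DecidableEq K]

/-- When `0 ∉ B`, the number of ways to write `w = a / b` with `a ∈ A`, `b ∈ B`. -/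
def divCount (A B : Finset K) (w : K) : ℕ := #{b ∈ B | w * b ∈ A}

lemma card_filter_div_eq_le_divCount {A B : Finset K} (hB : (0 : K) ∉ B) (w : K) :
    #{q ∈ A ×ˢ B | q.1 / q.2 = w} ≤ divCount A B w := by
  have hmul : ∀ q ∈ ({q ∈ A ×ˢ B | q.1 / q.2 = w} : Finset (K × K)), q.1 = w * q.2 := by
    intro q hq
    obtain ⟨hqAB, rfl⟩ := mem_filter.mp hq
    rw [div_mul_cancel₀ _ (ne_of_mem_of_not_mem (mem_product.mp hqAB).2 hB)]
  refine card_le_card_of_injOn Prod.snd (fun q hq => ?_) (fun q hq q' hq' h => ?_)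
  · have hqB := (mem_product.mp (mem_filter.mp hq).1).2
    exact mem_filter.mpr ⟨hqB, hmul q hq ▸ (mem_product.mp (mem_filter.mp hq).1).1⟩
  · exact Prod.ext (by rw [hmul q hq, hmul q' hq', show q.2 = q'.2 from h]) h

lemma card_filter_divCount_lt_le {A B : Finset K} (hB : (0 : K) ∉ B) {θ : ℝ} (hθ : 0 ≤ θ) :
    (#{q ∈ A ×ˢ B | (divCount A B (q.1 / q.2) : ℝ) < θ} : ℝ) ≤ #(A / B) * θ := by
  set L := {q ∈ A ×ˢ B | (divCount A B (q.1 / q.2) : ℝ) < θ}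
  set R := {w ∈ A / B | (divCount A B w : ℝ) < θ}
  have hmaps : ∀ q ∈ L, q.1 / q.2 ∈ R := fun q hq => by
    obtain ⟨hq, hlt⟩ := mem_filter.mp hq
    exact mem_filter.mpr ⟨div_mem_div (mem_product.mp hq).1 (mem_product.mp hq).2, hlt⟩
  have hfiber : ∀ w ∈ R, (#{q ∈ L | q.1 / q.2 = w} : ℝ) ≤ θ := fun w hw => by
    have hsub : #{q ∈ L | q.1 / q.2 = w} ≤ #{q ∈ A ×ˢ B | q.1 / q.2 = w} :=
      card_le_card (filter_subset_filter _ (filter_subset _ _))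
    exact le_of_lt <| lt_of_le_of_lt
      (by exact_mod_cast hsub.trans (card_filter_div_eq_le_divCount hB w)) (mem_filter.mp hw).2
  calc (#L : ℝ) = ∑ w ∈ R, (#{q ∈ L | q.1 / q.2 = w} : ℝ) := by
        exact_mod_cast card_eq_sum_card_fiberwise hmaps
    _ ≤ ∑ _w ∈ R, θ := sum_le_sum hfiber
    _ = #R * θ := by rw [sum_const, nsmul_eq_mul]
    _ ≤ #(A / B) * θ := by gcongr; exact filter_subset _ _

lemma divCount_div_le_card_filter_sub_mem {A B : Finset K} {a b : K} (ha : a ∈ A) (hb : b ∈ B)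
    (ha0 : a ≠ 0) (hb0 : b ≠ 0) :
    divCount A B (a / b) ≤ #{x ∈ image₂ (fun a b => a * (b + 1)) A B |
      x - (a - b) ∈ image₂ (fun b a => b * (a + 1)) B A} := by
  refine card_le_card_of_injOn (fun β => a * (β + 1)) (fun β hβ => ?_) (fun β _ β' _ h => ?_)
  · obtain ⟨hβB, hβA⟩ := mem_filter.mp hβ
    have hshift : a * (β + 1) - (a - b) = b * (a / b * β + 1) := by field_simp; ring
    exact mem_filter.mpr ⟨mem_image₂_of_mem ha hβB, hshift ▸ mem_image₂_of_mem hb hβA⟩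
  · simpa [ha0] using h

noncomputable def popularPairs (A B : Finset K) (θ : ℝ) : Finset (K × K) :=
  {q ∈ A ×ˢ B | θ ≤ divCount A B (q.1 / q.2)}

lemma card_mul_card_le_card_popularPairs_add {A B : Finset K} (hB : (0 : K) ∉ B) {θ : ℝ}
    (hθ : 0 ≤ θ) : (#A * #B : ℝ) ≤ #(popularPairs A B θ) + #(A / B) * θ := by
  have hsplit := card_filter_add_card_filter_not (s := A ×ˢ B)
    (p := fun q => θ ≤ divCount A B (q.1 / q.2))
  simp only [not_le, card_product] at hsplit
  have hsplit' := congrArg (Nat.cast : ℕ → ℝ) hsplit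
  push_cast at hsplit'
  have hlight := card_filter_divCount_lt_le (A := A) hB hθ
  rw [popularPairs]
  linarith

lemma card_image_sub_popularPairs_mul_le {A B : Finset K} (hA : (0 : K) ∉ A) (hB : (0 : K) ∉ B)
    (θ : ℝ) : #((popularPairs A B θ).image fun x => x.1 - x.2) * θ ≤
      #(image₂ (fun a b => a * (b + 1)) A B) * #(image₂ (fun b a => b * (a + 1)) B A) := by
  refine card_mul_le_of_forall_le_card_filter_sub_mem fun d hd => ?_
  obtain ⟨⟨a, b⟩, hab, rfl⟩ := mem_image.mp hd
  obtain ⟨hab, hθab⟩ := mem_filter.mp hab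
  obtain ⟨ha, hb⟩ := mem_product.mp hab
  have hcount := divCount_div_le_card_filter_sub_mem ha hb
    (ne_of_mem_of_not_mem ha hA) (ne_of_mem_of_not_mem hb hB)
  exact hθab.trans (by exact_mod_cast hcount)

theorem exists_subset_product_card_image_sub_le {A B : Finset K} (hA : (0 : K) ∉ A)
    (hB : (0 : K) ∉ B) {ε : ℝ} (hε : 0 < ε) :
    ∃ G ⊆ A ×ˢ B, (1 - ε) * #A * #B ≤ (#G : ℝ) ∧
      (#(G.image fun x => x.1 - x.2) : ℝ) ≤
        2 / ε * #(image₂ (fun a b => a * (b + 1)) A B) * #(image₂ (fun b a => b * (a + 1)) B A) *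
          #(A / B) / (#A * #B) := by
  rcases (A ×ˢ B).eq_empty_or_nonempty with hAB | hAB
  · have hN : (#A : ℝ) * #B = 0 := by exact_mod_cast (card_product A B).symm.trans (by simp [hAB])
    exact ⟨∅, empty_subset _, by simp [mul_assoc, hN], by simp [hN]⟩
  obtain ⟨hAne, hBne⟩ := nonempty_product.mp hAB
  have hN : (0 : ℝ) < #A * #B := by
    have := hAne.card_pos; have := hBne.card_pos; positivity
  have hQ : (0 : ℝ) < #(A / B) := by exact_mod_cast (div_nonempty.mpr ⟨hAne, hBne⟩).card_pos
  set θ : ℝ := ε * (#A * #B) / (2 * #(A / B)) with hθ_def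
  have hθ : 0 < θ := by positivity
  refine ⟨popularPairs A B θ, filter_subset _ _, ?_, ?_⟩
  · have hQθ : (#(A / B) : ℝ) * θ = ε * (#A * #B) / 2 := by rw [hθ_def]; field_simp
    linarith [card_mul_card_le_card_popularPairs_add (A := A) hB hθ.le, mul_pos hε hN]
  · calc _ ≤ _ / θ := (le_div_iff₀ hθ).mpr (card_image_sub_popularPairs_mul_le hA hB θ)
      _ = _ := by rw [hθ_def]; field_simp

end DivCount

theorem stmt0 (ε : ℝ) (hε : 0 < ε) :
    ∃ C : ℝ, 0 < C ∧ ∀ (p : ℕ) [Fact p.Prime] (A B : Finset (ZMod p)),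
      (0 : ZMod p) ∉ A → (0 : ZMod p) ∉ B →
      ∃ G ⊆ A ×ˢ B,
        (1 - ε) * A.card * B.card ≤ (G.card : ℝ) ∧
        ((G.image (fun x => x.1 - x.2)).card : ℝ) ≤
          C * (Finset.image₂ (fun a b => a * (b + 1)) A B).card *
            (Finset.image₂ (fun b a => b * (a + 1)) B A).card *
            (A / B).card / (A.card * B.card) :=
  ⟨2 / ε, by positivity, fun _ _ _ _ hA hB => exists_subset_product_card_image_sub_le hA hB hε⟩
end

section
/- Let 0 < ε < 1/16 and let A be a finite set in an abelian group with G ⊆ A × A satisfying |G| ≥ (1−ε)|A|². Then there exists A' ⊆ A with |A'| ≥ c(ε)|A| such that |A' − A'| ≤ C(ε) · |A −_G A|² / |A|. -/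
/-!
Let `n = |A|` and say `a ∈ A` has high degree if it has at least `(1 - 4ε) n` neighbours in `G`.
Since `G` misses at most `ε n²` pairs, Markov's inequality leaves at least `3n/4` such vertices;
take `A'` to be them. Two high-degree vertices `a, b` share at least `(1 - 8ε) n > n/2` neighbours `x`,
and each gives a representation `a - b = (a - x) - (b - x)` as a difference of two elements of
`D = A −_G A`, distinct `x` giving distinct representations. Since `D - D` has only `|D|²`
representations in all, `|A' − A'| · n/2 ≤ |D|²`.
-/

open Finset Pointwise

lemma sum_le_card_filter_mul_add {ι : Type*} (s : Finset ι) (f : ι → ℝ) {M : ℝ} (t : ℝ)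
    (hf : ∀ i ∈ s, f i ≤ M) :
    ∑ i ∈ s, f i ≤ #{i ∈ s | t ≤ f i} * M + (#s - #{i ∈ s | t ≤ f i}) * t := by
  have hcard : (#{i ∈ s | ¬t ≤ f i} : ℝ) = #s - #{i ∈ s | t ≤ f i} := by
    rw [← card_filter_add_card_filter_not (s := s) (fun i : ι => t ≤ f i)]
    push_cast
    ring
  rw [← sum_filter_add_sum_filter_not s (fun i => t ≤ f i), ← hcard]
  gcongr
  · simpa using sum_le_card_nsmul _ _ M fun i hi => hf i (mem_filter.1 hi).1
  · simpa using sum_le_card_nsmul _ _ t fun i hi => (not_le.1 (mem_filter.1 hi).2).le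

variable {α : Type*} [DecidableEq α]

def nbhd (G : Finset (α × α)) (A : Finset α) (a : α) : Finset α := {x ∈ A | (a, x) ∈ G}

noncomputable def highDegree (G : Finset (α × α)) (A : Finset α) (t : ℝ) : Finset α :=
  {a ∈ A | t ≤ #(nbhd G A a)}

lemma nbhd_subset {G : Finset (α × α)} {A : Finset α} {a : α} : nbhd G A a ⊆ A :=
  filter_subset _ _

lemma card_eq_sum_card_nbhd {G : Finset (α × α)} {A : Finset α} (hG : G ⊆ A ×ˢ A) :
    #G = ∑ a ∈ A, #(nbhd G A a) := by
  calc #G = #{p ∈ A ×ˢ A | p ∈ G} := by rw [filter_mem_eq_inter, inter_eq_right.2 hG]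
    _ = _ := by rw [card_filter, sum_product]; simp only [nbhd, card_filter]

lemma card_highDegree_ge {G : Finset (α × α)} {A : Finset α} {ε η : ℝ} (hη : 0 < η)
    (hG : G ⊆ A ×ˢ A) (hcard : (1 - ε) * #A ^ 2 ≤ #G) :
    (1 - ε / η) * #A ≤ #(highDegree G A ((1 - η) * #A)) := by
  rcases A.eq_empty_or_nonempty with rfl | hA
  · simp
  have hn : (0 : ℝ) < #A := by exact_mod_cast hA.card_pos
  have hsum := sum_le_card_filter_mul_add A (fun a => (#(nbhd G A a) : ℝ)) ((1 - η) * #A)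
    fun _ _ => Nat.cast_le.2 (card_le_card nbhd_subset)
  rw [← Nat.cast_sum, ← card_eq_sum_card_nbhd hG] at hsum
  have hk : η * (#A - #(highDegree G A ((1 - η) * #A))) ≤ ε * #A :=
    le_of_mul_le_mul_right (by unfold highDegree; linarith) hn
  rw [sub_mul, one_mul, div_mul_eq_mul_div, sub_le_comm, le_div_iff₀ hη]
  linarith

lemma card_add_card_le_card_add_card_inter {s t u : Finset α} (hs : s ⊆ u) (ht : t ⊆ u) :
    #s + #t ≤ #u + #(s ∩ t) := by
  rw [← card_union_add_card_inter]
  gcongr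
  exact union_subset hs ht

section AddCommGroup

variable [AddCommGroup α]

def restrictedSub (G : Finset (α × α)) : Finset α := G.image fun x => x.1 - x.2

lemma card_nbhd_inter_le_card_reps (G : Finset (α × α)) (A : Finset α) (a b : α) :
    #(nbhd G A a ∩ nbhd G A b) ≤
      #{p ∈ restrictedSub G ×ˢ restrictedSub G | p.1 - p.2 = a - b} := by
  refine card_le_card_of_injOn (fun x => (a - x, b - x)) (fun x hx => ?_)
    fun x _ y _ h => sub_right_injective (congrArg Prod.fst h)
  simp only [coe_inter, Set.mem_inter_iff, mem_coe, nbhd, mem_filter] at hx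
  simp only [mem_coe, mem_filter, mem_product, restrictedSub, mem_image]
  exact ⟨⟨⟨_, hx.1.2, rfl⟩, ⟨_, hx.2.2, rfl⟩⟩, by abel⟩

lemma card_mul_le_card_sq_of_le_card_reps {S D : Finset α} {k : ℝ}
    (h : ∀ v ∈ S, k ≤ #{p ∈ D ×ˢ D | p.1 - p.2 = v}) : #S * k ≤ #D ^ 2 := by
  calc (#S : ℝ) * k ≤ ∑ v ∈ S, (#{p ∈ D ×ˢ D | p.1 - p.2 = v} : ℝ) := by
        simpa using card_nsmul_le_sum S _ _ h
    _ = #{p ∈ D ×ˢ D | p.1 - p.2 ∈ S} := by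
        rw [← Nat.cast_sum, sum_card_fiberwise_eq_card_filter]
    _ ≤ #D ^ 2 := by
        rw [← Nat.cast_pow, sq, ← card_product]
        exact_mod_cast card_filter_le _ _

lemma card_sub_highDegree_mul_le (G : Finset (α × α)) (A : Finset α) (t : ℝ) :
    #(highDegree G A t - highDegree G A t) * (2 * t - #A) ≤ #(restrictedSub G) ^ 2 := by
  refine card_mul_le_card_sq_of_le_card_reps fun v hv => ?_
  obtain ⟨a, ha, b, hb, rfl⟩ := mem_sub.1 hv
  have hinter : (#(nbhd G A a) + #(nbhd G A b) : ℝ) ≤ #A + #(nbhd G A a ∩ nbhd G A b) := by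
    exact_mod_cast card_add_card_le_card_add_card_inter nbhd_subset nbhd_subset
  have hreps : (#(nbhd G A a ∩ nbhd G A b) : ℝ) ≤
      #{p ∈ restrictedSub G ×ˢ restrictedSub G | p.1 - p.2 = a - b} := by
    exact_mod_cast card_nbhd_inter_le_card_reps G A a b
  simp only [highDegree, mem_filter] at ha hb
  linarith [ha.2, hb.2]

end AddCommGroup

theorem stmt5 (ε : ℝ) (hε0 : 0 < ε) (hε1 : ε < 1/16) :
    ∃ c C : ℝ, 0 < c ∧ 0 < C ∧ ∀ {α : Type} [AddCommGroup α] [DecidableEq α]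
      (A : Finset α) (G : Finset (α × α)), G ⊆ A ×ˢ A →
      (1 - ε) * (A.card : ℝ) ^ 2 ≤ (G.card : ℝ) →
      ∃ A' ⊆ A, c * A.card ≤ (A'.card : ℝ) ∧
        ((A' - A').card : ℝ) ≤
          C * ((G.image (fun x => x.1 - x.2)).card : ℝ) ^ 2 / A.card := by
  refine ⟨3/4, 2, by norm_num, by norm_num, fun A G hG hcard => ?_⟩
  have hlarge := card_highDegree_ge (by positivity : 0 < 4 * ε) hG hcard
  rw [div_mul_cancel_right₀ hε0.ne'] at hlarge
  have hdiff := card_sub_highDegree_mul_le G A ((1 - 4 * ε) * #A)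
  set A' := highDegree G A ((1 - 4 * ε) * #A)
  refine ⟨A', filter_subset _ _, by linarith, ?_⟩
  rcases A.eq_empty_or_nonempty with rfl | hA
  · simp [A', highDegree]
  have hn : (0 : ℝ) < #A := by exact_mod_cast hA.card_pos
  change _ ≤ 2 * (#(restrictedSub G) : ℝ) ^ 2 / _
  rw [le_div_iff₀ hn]
  nlinarith [mul_nonneg ((#(A' - A')).cast_nonneg (α := ℝ)) hn.le]
end

section
/- For any finite set A ⊆ F_p with 0, −1 ∉ A, the ratio set satisfies |A/A| ≤ |A(A+1)|² / |A|, where A(A+1) = {a(b+1) : a, b ∈ A}. -/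
/-!
In a group with zero, finite sets avoiding `0` consist of units, so Ruzsa's triangle inequality
`|X / Z| |Y| ≤ |X Y| |Z Y|` for the unit group carries over to them. Taking `X = Z = A` and
`Y = A + 1`, which avoids `0` because `-1 ∉ A` and has the same size as `A`, gives
`|A / A| |A| ≤ |A (A + 1)|²`.
-/

open Finset Pointwise

namespace Finset

variable {G : Type*} [GroupWithZero G] [DecidableEq G]

theorem ruzsa_triangle_inequality_div_mul_mul_of_zero_notMem {A B C : Finset G}
    (hA : (0 : G) ∉ A) (hB : (0 : G) ∉ B) (hC : (0 : G) ∉ C) :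
    #(A / C) * #B ≤ #(A * B) * #(C * B) := by
  have isUnit_of_notMem {S : Finset G} (hS : (0 : G) ∉ S) : ∀ x ∈ S, IsUnit x :=
    fun x hx => isUnit_iff_ne_zero.2 (ne_of_mem_of_not_mem hx hS)
  lift A to Finset Gˣ using isUnit_of_notMem hA
  lift B to Finset Gˣ using isUnit_of_notMem hB
  lift C to Finset Gˣ using isUnit_of_notMem hC
  have hval : ((↑) : Gˣ → G) = Units.coeHom G := rfl
  have hinj : Function.Injective (Units.coeHom G) := Units.val_injective
  simp only [hval, ← image_div, ← image_mul, card_image_of_injective _ hinj]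
  exact ruzsa_triangle_inequality_div_mul_mul A B C

end Finset

theorem stmt6 (p : ℕ) [Fact p.Prime] (A : Finset (ZMod p))
    (h0 : (0 : ZMod p) ∉ A) (h1 : (-1 : ZMod p) ∉ A) :
    ((A / A).card : ℝ) ≤
      ((Finset.image₂ (fun a b => a * (b + 1)) A A).card : ℝ) ^ 2 / A.card := by
  rcases A.eq_empty_or_nonempty with rfl | hA
  · simp
  have hshift : (0 : ZMod p) ∉ A.image (· + 1) := by
    simpa [add_eq_zero_iff_eq_neg] using h1
  have hcard : #(A.image (· + 1)) = #A := card_image_of_injective _ (add_left_injective 1)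
  have key := ruzsa_triangle_inequality_div_mul_mul_of_zero_notMem h0 hshift h0
  rw [hcard] at key
  rw [le_div_iff₀ (by exact_mod_cast hA.card_pos), sq, ← image₂_image_right]
  exact_mod_cast key
end

section
/- Let A ⊆ F_p be a finite set with |A| < p^{1/2}, and suppose the ratio set R(A) = {(α−β)/(γ−δ) : α,β,γ,δ ∈ A, γ ≠ δ} equals all of F_p. Then there exists ξ ∈ R(A) such that the additive energy E_+(A, ξA) — the number of solutions of a + ξb = c + ξd with a,b,c,d ∈ A — is at most C|A|² for an absolute constant C. -/
open Finset

/-- The ratio set of differences `R(A) = {(α−β)/(γ−δ) : α,β,γ,δ ∈ A, γ ≠ δ}`. -/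
def ratioSet {p : ℕ} [Fact p.Prime] (A : Finset (ZMod p)) : Finset (ZMod p) :=
  (((A ×ˢ A) ×ˢ (A ×ˢ A)).filter (fun q => q.2.1 ≠ q.2.2)).image
    (fun q => (q.1.1 - q.1.2) / (q.2.1 - q.2.2))

/-! Every ξ solves `a + ξ b = c + ξ d` when `(a, b) = (c, d)`, and at most one ξ does otherwise.
Summing over ξ, `∑ ξ, E_+(A, ξA) ≤ |A|² |K| + |A|⁴ ≤ 2 |K| |A|²` once `|A|² ≤ |K|`, so some ξ
has energy at most `2 |A|²`. -/

lemma eq_of_add_mul_eq_add_mul {R : Type*} [CommRing R] [NoZeroDivisors R] {a b c d ξ ξ' : R}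
    (hab : (a, b) ≠ (c, d)) (hξ : a + ξ * b = c + ξ * d) (hξ' : a + ξ' * b = c + ξ' * d) :
    ξ = ξ' := by
  have hz : (ξ - ξ') * (b - d) = 0 := by linear_combination hξ - hξ'
  rcases mul_eq_zero.mp hz with h | h
  · exact sub_eq_zero.mp h
  · obtain rfl : b = d := sub_eq_zero.mp h
    exact absurd (by rw [add_right_cancel hξ]) hab

section DilateEnergy

variable {K : Type*} [Field K] [DecidableEq K]

/-- `E_+(A, ξA)`, counted as the solutions of `a + ξ b = c + ξ d` in `A⁴`; for `ξ = 0` this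
count is `|A|⁴`. -/
def dilateEnergy (A : Finset K) (ξ : K) : ℕ :=
  (((A ×ˢ A) ×ˢ (A ×ˢ A)).filter (fun q => q.1.1 + ξ * q.1.2 = q.2.1 + ξ * q.2.2)).card

variable [Fintype K]

lemma card_filter_add_mul_eq_le (q : (K × K) × (K × K)) :
    #{ξ | q.1.1 + ξ * q.1.2 = q.2.1 + ξ * q.2.2} ≤ if q.1 = q.2 then Fintype.card K else 1 := by
  split_ifs with hq
  · exact card_filter_le _ _
  · exact card_le_one.mpr fun ξ hξ ξ' hξ' =>
      eq_of_add_mul_eq_add_mul hq (mem_filter.mp hξ).2 (mem_filter.mp hξ').2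

lemma sum_dilateEnergy_le (A : Finset K) :
    ∑ ξ, dilateEnergy A ξ ≤ #A ^ 2 * Fintype.card K + #A ^ 4 := by
  set Q := (A ×ˢ A) ×ˢ (A ×ˢ A)
  have hdiag : #{q ∈ Q | q.1 = q.2} = #A ^ 2 := by
    have : {q ∈ Q | q.1 = q.2} = (A ×ˢ A).diag := by
      ext q
      simp only [Q, mem_filter, mem_product, mem_diag]
      aesop
    rw [this, diag_card, card_product, sq]
  calc ∑ ξ, dilateEnergy A ξ
      = ∑ q ∈ Q, #{ξ | q.1.1 + ξ * q.1.2 = q.2.1 + ξ * q.2.2} := by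
        simp only [dilateEnergy, card_filter]
        exact sum_comm
    _ ≤ ∑ q ∈ Q, if q.1 = q.2 then Fintype.card K else 1 :=
        sum_le_sum fun q _ => card_filter_add_mul_eq_le q
    _ = #{q ∈ Q | q.1 = q.2} * Fintype.card K + #{q ∈ Q | ¬q.1 = q.2} := by
        rw [sum_ite, sum_const, sum_const, smul_eq_mul, smul_eq_mul, mul_one]
    _ ≤ #A ^ 2 * Fintype.card K + #A ^ 4 := by
        rw [hdiag]
        gcongr
        exact (card_filter_le _ _).trans_eq (by simp only [Q, card_product]; ring)

lemma exists_dilateEnergy_le (A : Finset K) (hA : #A ^ 2 ≤ Fintype.card K) :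
    ∃ ξ, dilateEnergy A ξ ≤ 2 * #A ^ 2 := by
  have hsum : ∑ ξ : K, dilateEnergy A ξ ≤ ∑ _ξ : K, 2 * #A ^ 2 := by
    rw [sum_const, card_univ, smul_eq_mul]
    calc ∑ ξ, dilateEnergy A ξ ≤ #A ^ 2 * Fintype.card K + #A ^ 4 := sum_dilateEnergy_le A
      _ ≤ #A ^ 2 * Fintype.card K + #A ^ 2 * Fintype.card K := by
        rw [show #A ^ 4 = #A ^ 2 * #A ^ 2 by ring]; gcongr
      _ = Fintype.card K * (2 * #A ^ 2) := by ring
  obtain ⟨ξ, -, hξ⟩ := exists_le_of_sum_le univ_nonempty hsum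
  exact ⟨ξ, hξ⟩

end DilateEnergy

theorem stmt17 :
    ∃ C : ℝ, 0 < C ∧ ∀ (p : ℕ) [Fact p.Prime] (A : Finset (ZMod p)),
      (A.card : ℝ) < Real.sqrt p →
      ratioSet A = Finset.univ →
      ∃ ξ ∈ ratioSet A,
        (((((A ×ˢ A) ×ˢ (A ×ˢ A)).filter
            (fun q => q.1.1 + ξ * q.1.2 = q.2.1 + ξ * q.2.2)).card : ℝ) ≤
          C * (A.card : ℝ) ^ 2) := by
  refine ⟨2, two_pos, fun p _ A hA hR => ?_⟩
  have hA2 : #A ^ 2 ≤ Fintype.card (ZMod p) := by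
    rw [ZMod.card]
    exact_mod_cast (Real.lt_sqrt (Nat.cast_nonneg _)).mp hA |>.le
  obtain ⟨ξ, hξ⟩ := exists_dilateEnergy_le A hA2
  exact ⟨ξ, hR ▸ mem_univ ξ, by exact_mod_cast hξ⟩
end

section
/- Let A ⊆ F_p be finite and suppose R(A) = {(α−β)/(γ−δ) : α,β,γ,δ ∈ A, γ ≠ δ} is not all of F_p. Then there exists ξ ∈ R(A) with ξ − 1 ∉ R(A), and for any such ξ and any subset A* ⊆ A, the map (a, b) ↦ a + (ξ−1)b from A* × A* to F_p is injective; in particular |A* + (ξ−1)A*| = |A*|². -/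
/-!
Since `0, 1 ∈ R(A)` and `R(A) ≠ 𝔽_p`, walking down from `1` by steps of `-1` must leave `R(A)`,
which produces `ξ ∈ R(A)` with `ξ - 1 ∉ R(A)`. A collision `a + (ξ - 1) b = a' + (ξ - 1) b'` with
`b ≠ b'` would exhibit `ξ - 1 = (a' - a) / (b - b')` as an element of `R(A)`.
-/

open Finset

theorem ZMod.exists_mem_sub_one_notMem {n : ℕ} [NeZero n] {S : Finset (ZMod n)}
    (hne : S.Nonempty) (hS : S ≠ univ) : ∃ ξ ∈ S, ξ - 1 ∉ S := by
  by_contra! hclosed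
  obtain ⟨ξ, hξ⟩ := hne
  have hdown : ∀ k : ℕ, ξ - k ∈ S := by
    intro k
    induction k with
    | zero => simpa using hξ
    | succ k ih => simpa [sub_add_eq_sub_sub] using hclosed _ ih
  exact hS <| eq_univ_of_forall fun y => by
    simpa [ZMod.natCast_zmod_val] using hdown (ξ - y).val

section RatioSet

variable {p : ℕ} [Fact p.Prime] {A : Finset (ZMod p)}

theorem div_mem_ratioSet {a b c d : ZMod p} (ha : a ∈ A) (hb : b ∈ A) (hc : c ∈ A)
    (hd : d ∈ A) (hcd : c ≠ d) : (a - b) / (c - d) ∈ ratioSet A := by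
  simp only [ratioSet, mem_image, mem_filter, mem_product]
  exact ⟨((a, b), (c, d)), ⟨⟨⟨ha, hb⟩, hc, hd⟩, hcd⟩, rfl⟩

theorem one_mem_ratioSet (hA : 2 ≤ #A) : (1 : ZMod p) ∈ ratioSet A := by
  obtain ⟨a, ha, b, hb, hab⟩ := one_lt_card.mp hA
  simpa [div_self (sub_ne_zero.mpr hab)] using div_mem_ratioSet ha hb ha hb hab

theorem injOn_add_mul_of_notMem_ratioSet {c : ZMod p} (hc : c ∉ ratioSet A) {B : Finset (ZMod p)}
    (hB : B ⊆ A) : Set.InjOn (fun q : ZMod p × ZMod p => q.1 + c * q.2) (B ×ˢ B : Finset _) := by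
  rintro ⟨a, b⟩ hab ⟨a', b'⟩ hab' heq
  simp only [coe_product, Set.mem_prod, mem_coe] at hab hab' heq
  by_cases hbb : b = b'
  · subst hbb
    simp only [Prod.mk.injEq, and_true]
    linear_combination heq
  · refine absurd ?_ hc
    have hc_eq : c = (a' - a) / (b - b') := by
      rw [eq_div_iff (sub_ne_zero.mpr hbb)]
      linear_combination heq
    exact hc_eq ▸ div_mem_ratioSet (hB hab'.1) (hB hab.1) (hB hab.2) (hB hab'.2) hbb

end RatioSet

theorem stmt19 (p : ℕ) [Fact p.Prime] (A : Finset (ZMod p)) (hA : 2 ≤ A.card)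
    (hR : ratioSet A ≠ Finset.univ) :
    (∃ ξ ∈ ratioSet A, ξ - 1 ∉ ratioSet A) ∧
    ∀ ξ ∈ ratioSet A, ξ - 1 ∉ ratioSet A →
      ∀ Astar ⊆ A,
        Set.InjOn (fun q : ZMod p × ZMod p => q.1 + (ξ - 1) * q.2)
          (Astar ×ˢ Astar : Finset (ZMod p × ZMod p)) ∧
        ((Astar ×ˢ Astar).image (fun q => q.1 + (ξ - 1) * q.2)).card = Astar.card ^ 2 := by
  refine ⟨ZMod.exists_mem_sub_one_notMem ⟨1, one_mem_ratioSet hA⟩ hR, ?_⟩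
  intro ξ _ hξ Astar hsub
  have hinj := injOn_add_mul_of_notMem_ratioSet hξ hsub
  exact ⟨hinj, by rw [card_image_of_injOn hinj, card_product, sq]⟩
end
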